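/- arXiv:2108.12852 — 3 statements merged into one kernel-verified Lean document; each statement's English description precedes it below -/
import Mathlib

section
/- Let V, D, E, F be real vector spaces, ▷ : D × E → E and ▷ : D × F → F bilinear maps, and {,} : E × E → F a bilinear map satisfying the derivation property X ▷ {Y₁, Y₂} = {X ▷ Y₁, Y₂} + {Y₁, X ▷ Y₂} for all X ∈ D, Y₁, Y₂ ∈ E. Then for every D-valued alternating k-form A, every E-valued alternating t₁-form B₁ and every E-valued alternating t₂-form B₂ on V, A ∧^▷ (B₁ ∧^{{,}} B₂) = (A ∧^▷ B₁) ∧^{{,}} B₂ + (−1)^{k t₁} B₁ ∧^{{,}} (A ∧^▷ B₂). -/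
/-! Wedge product of vector-valued alternating forms along a bilinear map,
given by the shuffle-sum formula
`(ω ∧_μ η)(v₁,…,v_{k₁+k₂}) = Σ_σ sgn(σ) μ(ω(v_{σ(1)},…,v_{σ(k₁)}), η(v_{σ(k₁+1)},…,v_{σ(k₁+k₂)}))`,
the sum ranging over (k₁,k₂)-shuffles σ. -/

/-- The finset of (k₁,k₂)-shuffles: permutations of `Fin (k₁+k₂)` that are strictly
increasing on the first `k₁` indices and on the last `k₂` indices. -/
def shuffleSet (k₁ k₂ : ℕ) : Finset (Equiv.Perm (Fin (k₁ + k₂))) :=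
  Finset.univ.filter fun σ =>
    (∀ i j : Fin k₁, i < j → σ (Fin.castAdd k₂ i) < σ (Fin.castAdd k₂ j)) ∧
    (∀ i j : Fin k₂, i < j → σ (Fin.natAdd k₁ i) < σ (Fin.natAdd k₁ j))

/-- The wedge product along a bilinear map `μ : E →ₗ F →ₗ W`, defined on the underlying
functions of vector-valued forms by the shuffle-sum formula. -/
def wedgeRaw {V E F W : Type*} [AddCommGroup E] [Module ℝ E] [AddCommGroup F] [Module ℝ F]
    [AddCommGroup W] [Module ℝ W] {k₁ k₂ : ℕ}
    (μ : E →ₗ[ℝ] F →ₗ[ℝ] W)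
    (ω : (Fin k₁ → V) → E) (η : (Fin k₂ → V) → F) :
    (Fin (k₁ + k₂) → V) → W :=
  fun v => ∑ σ ∈ shuffleSet k₁ k₂,
    (Equiv.Perm.sign σ : ℤ) •
      μ (ω fun i => v (σ (Fin.castAdd k₂ i))) (η fun i => v (σ (Fin.natAdd k₁ i)))

/-- Reinterpret a `k`-form as a `k'`-form along an equality of degrees `k = k'`. -/
def castRaw {V W : Type*} {k k' : ℕ} (h : k = k') (ω : (Fin k → V) → W) :
    (Fin k' → V) → W :=
  fun v => ω fun i => v (Fin.cast h i)

/-!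
For antisymmetric `ω` and `η`, the shuffle sum defining `ω ∧_μ η`, multiplied by `k₁! k₂!`,
is the full antisymmetrization
`∑_{π ∈ S_{k₁+k₂}} sgn π • μ (ω (v ∘ π ∘ castAdd)) (η (v ∘ π ∘ natAdd))`,
because every permutation factors uniquely as a shuffle followed by a permutation of each block.
Applied twice, each of the three nested wedges in the identity, multiplied by `k! t₁! t₂!`,
becomes one antisymmetrization over `S_{k+t₁+t₂}` of a trilinear expression in `A`, `B₁`, `B₂`;
for `B₁ ∧ (A ∧ B₂)` the block of `A` has first to be moved in front of that of `B₁`, at the cost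
of the sign `(-1)^{k t₁}` of this block swap. The identity then holds term by term by the
derivation property of `{,}`.
-/

open Equiv Equiv.Perm Finset
open scoped Nat

theorem Tuple.sort_comp_perm_of_strictMono {n : ℕ} {α : Type*} [LinearOrder α] {f : Fin n → α}
    (hf : StrictMono f) (τ : Perm (Fin n)) : Tuple.sort (f ∘ τ) = τ⁻¹ := by
  refine (Tuple.eq_sort_iff.mpr ⟨?_, fun i j hij hfij => ?_⟩).symm
  · simpa [Function.comp_def] using hf.monotone
  · simp only [Perm.coe_inv, Function.comp_apply, apply_symm_apply] at hfij
    exact absurd (hf.injective hfij) hij.ne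

theorem Tuple.strictMono_comp_sort_of_injective {n : ℕ} {α : Type*} [LinearOrder α]
    {f : Fin n → α} (hf : Function.Injective f) : StrictMono (f ∘ Tuple.sort f) :=
  (Tuple.monotone_sort f).strictMono_of_injective (hf.comp (Tuple.sort f).injective)

theorem val_finRotate_pow_apply {n : ℕ} (j : ℕ) (x : Fin n) :
    ((finRotate n ^ j) x : ℕ) = (x + j) % n := by
  induction j with
  | zero => simp [Nat.mod_eq_of_lt x.isLt]
  | succ j ih =>
    rw [pow_succ', Perm.mul_apply, finRotate_apply, Fin.val_add, ih, Fin.val_one',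
      Nat.add_mod_mod, Nat.mod_add_mod, Nat.add_assoc]

theorem sign_finRotate_add_pow (a b : ℕ) : sign (finRotate (a + b) ^ b) = (-1) ^ (a * b) := by
  rcases b with _ | b
  · simp
  · rw [map_pow, ← Nat.add_assoc, sign_finRotate, ← pow_mul, Nat.add_sub_cancel, Nat.add_mul,
      pow_add, (Nat.even_mul_succ_self b).neg_one_pow, mul_one]

namespace ShuffleWedge

section Antisymmetrize

variable {ι κ V W : Type*} [Fintype ι] [DecidableEq ι] [Fintype κ] [DecidableEq κ]
  [AddCommGroup W]

def antisymmetrize (Φ : (ι → V) → W) (v : ι → V) : W :=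
  ∑ σ : Perm ι, sign σ • Φ (v ∘ σ)

def IsAntisymmetric (ω : (ι → V) → W) : Prop :=
  ∀ (v : ι → V) (σ : Perm ι), ω (v ∘ σ) = sign σ • ω v

theorem isAntisymmetric_antisymmetrize (Φ : (ι → V) → W) :
    IsAntisymmetric (antisymmetrize Φ) := by
  intro v σ
  rw [antisymmetrize, antisymmetrize, smul_sum, ← Equiv.sum_comp (Equiv.mulLeft σ⁻¹)]
  refine Fintype.sum_congr _ _ fun π => ?_
  simp [smul_smul, Function.comp_def]

theorem antisymmetrize_precomp_perm (Φ : (ι → V) → W) (v : ι → V) (σ : Perm ι) :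
    antisymmetrize (fun u => Φ (u ∘ σ)) v = sign σ • antisymmetrize Φ v := by
  rw [antisymmetrize, antisymmetrize, smul_sum, ← Equiv.sum_comp (Equiv.mulRight σ⁻¹)]
  refine Fintype.sum_congr _ _ fun π => ?_
  simp [smul_smul, Function.comp_def, mul_comm]

theorem antisymmetrize_comp_equiv (θ : ι ≃ κ) (Φ : (ι → V) → W) (v : κ → V) :
    antisymmetrize Φ (v ∘ θ) = antisymmetrize (fun u => Φ (u ∘ θ)) v := by
  rw [antisymmetrize, antisymmetrize, ← θ.permCongr.sum_comp]
  refine Fintype.sum_congr _ _ fun π => ?_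
  rw [sign_permCongr]
  congr 2
  ext x
  simp [permCongr_apply]

theorem antisymmetrize_add (Φ Ψ : (ι → V) → W) (v : ι → V) :
    antisymmetrize (fun u => Φ u + Ψ u) v = antisymmetrize Φ v + antisymmetrize Ψ v := by
  simp only [antisymmetrize, smul_add, sum_add_distrib]

theorem antisymmetrize_sum_precomp (f : Perm κ → Perm ι) (hf : ∀ ρ, sign (f ρ) = sign ρ)
    (Φ : (ι → V) → W) (v : ι → V) :
    antisymmetrize (fun u => ∑ ρ, sign ρ • Φ (u ∘ f ρ)) v
      = (Fintype.card κ)! • antisymmetrize Φ v := by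
  calc antisymmetrize (fun u => ∑ ρ, sign ρ • Φ (u ∘ f ρ)) v
      = ∑ ρ, sign ρ • antisymmetrize (fun u => Φ (u ∘ f ρ)) v := by
        simp only [antisymmetrize, smul_sum]
        rw [sum_comm]
        exact Fintype.sum_congr _ _ fun ρ => Fintype.sum_congr _ _ fun σ => smul_comm _ _ _
    _ = ∑ _ρ : Perm κ, antisymmetrize Φ v := by
        refine Fintype.sum_congr _ _ fun ρ => ?_
        rw [antisymmetrize_precomp_perm, hf, smul_smul, Int.units_mul_self, one_smul]
    _ = (Fintype.card κ)! • antisymmetrize Φ v := by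
        rw [sum_const, card_univ, Fintype.card_perm]

end Antisymmetrize

def sumPerm (p q : ℕ) : Perm (Fin p) × Perm (Fin q) →* Perm (Fin (p + q)) :=
  finSumFinEquiv.permCongrHom.toMonoidHom.comp (sumCongrHom _ _)

section SumPerm

variable {p q : ℕ}

@[simp] theorem sumPerm_castAdd (τ : Perm (Fin p) × Perm (Fin q)) (i : Fin p) :
    sumPerm p q τ (Fin.castAdd q i) = Fin.castAdd q (τ.1 i) := by
  simp [sumPerm, permCongrHom, permCongr_apply]

@[simp] theorem sumPerm_natAdd (τ : Perm (Fin p) × Perm (Fin q)) (i : Fin q) :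
    sumPerm p q τ (Fin.natAdd p i) = Fin.natAdd p (τ.2 i) := by
  simp [sumPerm, permCongrHom, permCongr_apply]

@[simp] theorem sign_sumPerm (τ : Perm (Fin p) × Perm (Fin q)) :
    sign (sumPerm p q τ) = sign τ.1 * sign τ.2 := by
  simp [sumPerm, permCongrHom, sign_permCongr, sign_sumCongr]

end SumPerm

theorem mem_shuffleSet {p q : ℕ} {σ : Perm (Fin (p + q))} :
    σ ∈ shuffleSet p q ↔ StrictMono (σ ∘ Fin.castAdd q) ∧ StrictMono (σ ∘ Fin.natAdd p) := by
  simp only [shuffleSet, mem_filter, mem_univ, true_and]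
  rfl

theorem sum_perm_eq_sum_shuffleSet {M : Type*} [AddCommMonoid M] (p q : ℕ)
    (g : Perm (Fin (p + q)) → M) :
    ∑ π, g π = ∑ σ ∈ shuffleSet p q, ∑ τ, g (σ * sumPerm p q τ) := by
  let sorting (π : Perm (Fin (p + q))) : Perm (Fin p) × Perm (Fin q) :=
    (Tuple.sort (π ∘ Fin.castAdd q), Tuple.sort (π ∘ Fin.natAdd p))
  rw [← sum_product']
  refine (sum_nbij' (fun x => x.1 * sumPerm p q x.2)
    (fun π => (π * sumPerm p q (sorting π), (sorting π)⁻¹)) ?_ ?_ ?_ ?_ ?_).symm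
  · simp
  · intro π _
    simp only [mem_product, mem_univ, and_true, mem_shuffleSet]
    constructor
    · convert Tuple.strictMono_comp_sort_of_injective
        (π.injective.comp (Fin.castAdd_injective p q)) using 1
      ext i; simp [sorting]
    · convert Tuple.strictMono_comp_sort_of_injective
        (π.injective.comp (Fin.natAdd_injective q p)) using 1
      ext i; simp [sorting]
  · rintro ⟨σ, τ⟩ hσ
    obtain ⟨hσ₁, hσ₂⟩ := mem_shuffleSet.mp (mem_product.mp hσ).1
    have hsort : sorting (σ * sumPerm p q τ) = τ⁻¹ := by
      have e₁ : ⇑(σ * sumPerm p q τ) ∘ Fin.castAdd q = (σ ∘ Fin.castAdd q) ∘ τ.1 := by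
        ext i; simp
      have e₂ : ⇑(σ * sumPerm p q τ) ∘ Fin.natAdd p = (σ ∘ Fin.natAdd p) ∘ τ.2 := by
        ext i; simp
      simp only [sorting, e₁, e₂, Tuple.sort_comp_perm_of_strictMono hσ₁,
        Tuple.sort_comp_perm_of_strictMono hσ₂]
      rfl
    simp [hsort, mul_assoc]
  · intro π _
    simp [mul_assoc]
  · intros; rfl

theorem eq_of_nsmul_eq_nsmul {W : Type*} [AddCommGroup W] [Module ℝ W] {n : ℕ} (hn : n ≠ 0)
    {x y : W} (h : n • x = n • y) : x = y := by
  rw [← Nat.cast_smul_eq_nsmul ℝ, ← Nat.cast_smul_eq_nsmul ℝ n y] at h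
  exact smul_right_injective W (Nat.cast_ne_zero.mpr hn) h

theorem _root_.AlternatingMap.isAntisymmetric {R V W ι : Type*} [Semiring R] [AddCommMonoid V]
    [Module R V] [AddCommGroup W] [Module R W] [Fintype ι] [DecidableEq ι]
    (f : AlternatingMap R V W ι) :
    IsAntisymmetric (⇑f) :=
  f.map_perm

section Wedge

variable {V E F W : Type*} [AddCommGroup E] [Module ℝ E] [AddCommGroup F] [Module ℝ F]
  [AddCommGroup W] [Module ℝ W] {p q : ℕ}

theorem wedgeRaw_nsmul_left (μ : E →ₗ[ℝ] F →ₗ[ℝ] W) (ω : (Fin p → V) → E)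
    (η : (Fin q → V) → F) (n : ℕ) : wedgeRaw μ (n • ω) η = n • wedgeRaw μ ω η := by
  ext v
  simp [wedgeRaw, smul_sum, smul_comm n]

theorem wedgeRaw_nsmul_right (μ : E →ₗ[ℝ] F →ₗ[ℝ] W) (ω : (Fin p → V) → E)
    (η : (Fin q → V) → F) (n : ℕ) : wedgeRaw μ ω (n • η) = n • wedgeRaw μ ω η := by
  ext v
  simp [wedgeRaw, smul_sum, smul_comm n]

theorem nsmul_wedgeRaw_eq_antisymmetrize (μ : E →ₗ[ℝ] F →ₗ[ℝ] W) {ω : (Fin p → V) → E}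
    {η : (Fin q → V) → F} (hω : IsAntisymmetric ω) (hη : IsAntisymmetric η)
    (v : Fin (p + q) → V) :
    (p ! * q !) • wedgeRaw μ ω η v
      = antisymmetrize (fun u => μ (ω (u ∘ Fin.castAdd q)) (η (u ∘ Fin.natAdd p))) v := by
  rw [antisymmetrize, sum_perm_eq_sum_shuffleSet, wedgeRaw, smul_sum]
  refine sum_congr rfl fun σ _ => ?_
  have hτ (τ : Perm (Fin p) × Perm (Fin q)) :
      sign (σ * sumPerm p q τ) • μ (ω ((v ∘ ⇑(σ * sumPerm p q τ)) ∘ Fin.castAdd q))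
        (η ((v ∘ ⇑(σ * sumPerm p q τ)) ∘ Fin.natAdd p))
      = (sign σ : ℤ) • μ (ω fun i => v (σ (Fin.castAdd q i)))
          (η fun i => v (σ (Fin.natAdd p i))) := by
    have e₁ : (v ∘ ⇑(σ * sumPerm p q τ)) ∘ Fin.castAdd q
        = (fun i => v (σ (Fin.castAdd q i))) ∘ τ.1 := by ext; simp
    have e₂ : (v ∘ ⇑(σ * sumPerm p q τ)) ∘ Fin.natAdd p
        = (fun i => v (σ (Fin.natAdd p i))) ∘ τ.2 := by ext; simp
    rw [e₁, e₂, hω, hη]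
    simp only [Units.smul_def, map_zsmul, LinearMap.smul_apply, smul_smul, map_mul, sign_sumPerm]
    congr 1
    have hsq (s : ℤˣ) : (s : ℤ) * s = 1 := by
      rw [← Units.val_mul, Int.units_mul_self, Units.val_one]
    push_cast
    linear_combination
      (sign σ * sign τ.2 * sign τ.2 : ℤ) * hsq (sign τ.1) + (sign σ : ℤ) * hsq (sign τ.2)
  rw [Fintype.sum_congr _ _ hτ, sum_const, card_univ, Fintype.card_prod, Fintype.card_perm,
    Fintype.card_perm, Fintype.card_fin, Fintype.card_fin]

theorem antisymmetrize_wedge_antisymmetrize_right (μ : E →ₗ[ℝ] F →ₗ[ℝ] W)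
    (ω : (Fin p → V) → E) (Ψ : (Fin q → V) → F) (v : Fin (p + q) → V) :
    antisymmetrize (fun u => μ (ω (u ∘ Fin.castAdd q)) (antisymmetrize Ψ (u ∘ Fin.natAdd p))) v
      = q ! • antisymmetrize (fun u => μ (ω (u ∘ Fin.castAdd q)) (Ψ (u ∘ Fin.natAdd p))) v := by
  have hpad (u : Fin (p + q) → V) (ρ : Perm (Fin q)) :
      (u ∘ sumPerm p q (1, ρ)) ∘ Fin.castAdd q = u ∘ Fin.castAdd q ∧
        (u ∘ sumPerm p q (1, ρ)) ∘ Fin.natAdd p = (u ∘ Fin.natAdd p) ∘ ρ :=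
    ⟨by ext; simp, by ext; simp⟩
  have key : (fun u => μ (ω (u ∘ Fin.castAdd q)) (antisymmetrize Ψ (u ∘ Fin.natAdd p)))
      = fun u => ∑ ρ, sign ρ • (fun u' => μ (ω (u' ∘ Fin.castAdd q)) (Ψ (u' ∘ Fin.natAdd p)))
          (u ∘ sumPerm p q (1, ρ)) := by
    ext u
    simp only [antisymmetrize, map_sum, Units.smul_def, map_zsmul, hpad]
  have hsum := antisymmetrize_sum_precomp (fun ρ : Perm (Fin q) => sumPerm p q (1, ρ))
    (fun ρ => by simp) (fun u' => μ (ω (u' ∘ Fin.castAdd q)) (Ψ (u' ∘ Fin.natAdd p))) v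
  rw [key, hsum, Fintype.card_fin]

theorem antisymmetrize_wedge_antisymmetrize_left (μ : E →ₗ[ℝ] F →ₗ[ℝ] W)
    (Ψ : (Fin p → V) → E) (η : (Fin q → V) → F) (v : Fin (p + q) → V) :
    antisymmetrize (fun u => μ (antisymmetrize Ψ (u ∘ Fin.castAdd q)) (η (u ∘ Fin.natAdd p))) v
      = p ! • antisymmetrize (fun u => μ (Ψ (u ∘ Fin.castAdd q)) (η (u ∘ Fin.natAdd p))) v := by
  have hpad (u : Fin (p + q) → V) (ρ : Perm (Fin p)) :
      (u ∘ sumPerm p q (ρ, 1)) ∘ Fin.castAdd q = (u ∘ Fin.castAdd q) ∘ ρ ∧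
        (u ∘ sumPerm p q (ρ, 1)) ∘ Fin.natAdd p = u ∘ Fin.natAdd p :=
    ⟨by ext; simp, by ext; simp⟩
  have key : (fun u => μ (antisymmetrize Ψ (u ∘ Fin.castAdd q)) (η (u ∘ Fin.natAdd p)))
      = fun u => ∑ ρ, sign ρ • (fun u' => μ (Ψ (u' ∘ Fin.castAdd q)) (η (u' ∘ Fin.natAdd p)))
          (u ∘ sumPerm p q (ρ, 1)) := by
    ext u
    simp only [antisymmetrize, map_sum, Units.smul_def, map_zsmul, LinearMap.coe_sum,
      Finset.sum_apply, LinearMap.smul_apply, hpad]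
  have hsum := antisymmetrize_sum_precomp (fun ρ : Perm (Fin p) => sumPerm p q (ρ, 1))
    (fun ρ => by simp) (fun u' => μ (Ψ (u' ∘ Fin.castAdd q)) (η (u' ∘ Fin.natAdd p))) v
  rw [key, hsum, Fintype.card_fin]

end Wedge

-- `finRotate (a + b) ^ b` moves the first `a` positions behind the next `b`.
def blockSwap (a b c : ℕ) : Perm (Fin (a + (b + c))) :=
  (finCongr (Nat.add_assoc a b c)).permCongr (sumPerm (a + b) c (finRotate (a + b) ^ b, 1))

section BlockSwap

variable {a b c : ℕ}

theorem sign_blockSwap : sign (blockSwap a b c) = (-1) ^ (a * b) := by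
  simp [blockSwap, sign_permCongr, sign_finRotate_add_pow]

theorem blockSwap_castAdd (h : b + (a + c) = a + (b + c)) (i : Fin a) :
    blockSwap a b c (Fin.castAdd (b + c) i) = Fin.cast h (Fin.natAdd b (Fin.castAdd c i)) := by
  have e : (finCongr (Nat.add_assoc a b c)).symm (Fin.castAdd (b + c) i)
      = Fin.castAdd c (Fin.castAdd b i) := Fin.ext rfl
  rw [blockSwap, permCongr_apply, e, sumPerm_castAdd]
  ext
  simp only [finCongr_apply, Fin.val_cast, Fin.val_castAdd, Fin.val_natAdd,
    val_finRotate_pow_apply]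
  rw [Nat.mod_eq_of_lt (Nat.add_lt_add_right i.isLt b), Nat.add_comm]

theorem blockSwap_natAdd_castAdd (h : b + (a + c) = a + (b + c)) (j : Fin b) :
    blockSwap a b c (Fin.natAdd a (Fin.castAdd c j)) = Fin.cast h (Fin.castAdd (a + c) j) := by
  have e : (finCongr (Nat.add_assoc a b c)).symm (Fin.natAdd a (Fin.castAdd c j))
      = Fin.castAdd c (Fin.natAdd a j) := Fin.ext rfl
  rw [blockSwap, permCongr_apply, e, sumPerm_castAdd]
  ext
  simp [val_finRotate_pow_apply, Nat.add_right_comm a,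
    Nat.mod_eq_of_lt (j.isLt.trans_le (Nat.le_add_left b a))]

theorem blockSwap_natAdd_natAdd (h : b + (a + c) = a + (b + c)) (l : Fin c) :
    blockSwap a b c (Fin.natAdd a (Fin.natAdd b l))
      = Fin.cast h (Fin.natAdd b (Fin.natAdd a l)) := by
  have e : (finCongr (Nat.add_assoc a b c)).symm (Fin.natAdd a (Fin.natAdd b l))
      = Fin.natAdd (a + b) l := Fin.ext (Nat.add_assoc a b l).symm
  rw [blockSwap, permCongr_apply, e, sumPerm_natAdd]
  ext
  simp; omega

end BlockSwap

section Associativity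

variable {V E₁ E₂ E₃ F W : Type*} [AddCommGroup E₁] [Module ℝ E₁] [AddCommGroup E₂]
  [Module ℝ E₂] [AddCommGroup E₃] [Module ℝ E₃] [AddCommGroup F] [Module ℝ F]
  [AddCommGroup W] [Module ℝ W] {a b c : ℕ} {ω₁ : (Fin a → V) → E₁}
  {ω₂ : (Fin b → V) → E₂} {ω₃ : (Fin c → V) → E₃}

theorem nsmul_wedgeRaw_wedgeRaw_right (μ : E₁ →ₗ[ℝ] F →ₗ[ℝ] W) (ν : E₂ →ₗ[ℝ] E₃ →ₗ[ℝ] F)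
    (h₁ : IsAntisymmetric ω₁) (h₂ : IsAntisymmetric ω₂) (h₃ : IsAntisymmetric ω₃)
    (v : Fin (a + (b + c)) → V) :
    (a ! * b ! * c !) • wedgeRaw μ ω₁ (wedgeRaw ν ω₂ ω₃) v
      = antisymmetrize (fun u => μ (ω₁ (u ∘ Fin.castAdd (b + c)))
          (ν (ω₂ (u ∘ Fin.natAdd a ∘ Fin.castAdd c))
            (ω₃ (u ∘ Fin.natAdd a ∘ Fin.natAdd b)))) v := by
  apply eq_of_nsmul_eq_nsmul (Nat.factorial_ne_zero (b + c))
  have inner : (b ! * c !) • wedgeRaw ν ω₂ ω₃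
      = antisymmetrize (fun u => ν (ω₂ (u ∘ Fin.castAdd c)) (ω₃ (u ∘ Fin.natAdd b))) :=
    funext (nsmul_wedgeRaw_eq_antisymmetrize ν h₂ h₃)
  calc (b + c)! • (a ! * b ! * c !) • wedgeRaw μ ω₁ (wedgeRaw ν ω₂ ω₃) v
      = (a ! * (b + c)!) • wedgeRaw μ ω₁ ((b ! * c !) • wedgeRaw ν ω₂ ω₃) v := by
        rw [wedgeRaw_nsmul_right, Pi.smul_apply, smul_smul, smul_smul]
        ring_nf
    _ = _ := by
        rw [inner, nsmul_wedgeRaw_eq_antisymmetrize μ h₁ (isAntisymmetric_antisymmetrize _)]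
        exact antisymmetrize_wedge_antisymmetrize_right μ ω₁ _ v

theorem nsmul_wedgeRaw_wedgeRaw_left (μ : F →ₗ[ℝ] E₃ →ₗ[ℝ] W) (ν : E₁ →ₗ[ℝ] E₂ →ₗ[ℝ] F)
    (h₁ : IsAntisymmetric ω₁) (h₂ : IsAntisymmetric ω₂) (h₃ : IsAntisymmetric ω₃)
    (v : Fin (a + b + c) → V) :
    (a ! * b ! * c !) • wedgeRaw μ (wedgeRaw ν ω₁ ω₂) ω₃ v
      = antisymmetrize (fun u => μ (ν (ω₁ (u ∘ Fin.castAdd c ∘ Fin.castAdd b))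
          (ω₂ (u ∘ Fin.castAdd c ∘ Fin.natAdd a))) (ω₃ (u ∘ Fin.natAdd (a + b)))) v := by
  apply eq_of_nsmul_eq_nsmul (Nat.factorial_ne_zero (a + b))
  have inner : (a ! * b !) • wedgeRaw ν ω₁ ω₂
      = antisymmetrize (fun u => ν (ω₁ (u ∘ Fin.castAdd b)) (ω₂ (u ∘ Fin.natAdd a))) :=
    funext (nsmul_wedgeRaw_eq_antisymmetrize ν h₁ h₂)
  calc (a + b)! • (a ! * b ! * c !) • wedgeRaw μ (wedgeRaw ν ω₁ ω₂) ω₃ v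
      = ((a + b)! * c !) • wedgeRaw μ ((a ! * b !) • wedgeRaw ν ω₁ ω₂) ω₃ v := by
        rw [wedgeRaw_nsmul_left, Pi.smul_apply, smul_smul, smul_smul]
        ring_nf
    _ = _ := by
        rw [inner, nsmul_wedgeRaw_eq_antisymmetrize μ (isAntisymmetric_antisymmetrize _) h₃]
        exact antisymmetrize_wedge_antisymmetrize_left μ _ ω₃ v

theorem nsmul_castRaw_wedgeRaw_wedgeRaw_left (μ : F →ₗ[ℝ] E₃ →ₗ[ℝ] W)
    (ν : E₁ →ₗ[ℝ] E₂ →ₗ[ℝ] F) (h₁ : IsAntisymmetric ω₁) (h₂ : IsAntisymmetric ω₂)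
    (h₃ : IsAntisymmetric ω₃) (h : a + b + c = a + (b + c)) (v : Fin (a + (b + c)) → V) :
    (a ! * b ! * c !) • castRaw h (wedgeRaw μ (wedgeRaw ν ω₁ ω₂) ω₃) v
      = antisymmetrize (fun u => μ (ν (ω₁ (u ∘ Fin.castAdd (b + c)))
          (ω₂ (u ∘ Fin.natAdd a ∘ Fin.castAdd c))) (ω₃ (u ∘ Fin.natAdd a ∘ Fin.natAdd b))) v := by
  change _ • wedgeRaw μ (wedgeRaw ν ω₁ ω₂) ω₃ (v ∘ finCongr h) = _
  rw [nsmul_wedgeRaw_wedgeRaw_left μ ν h₁ h₂ h₃, antisymmetrize_comp_equiv]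
  have e₁ (i : Fin a) : Fin.cast h (Fin.castAdd c (Fin.castAdd b i)) = Fin.castAdd (b + c) i :=
    Fin.ext rfl
  have e₂ (j : Fin b) :
      Fin.cast h (Fin.castAdd c (Fin.natAdd a j)) = Fin.natAdd a (Fin.castAdd c j) :=
    Fin.ext rfl
  have e₃ (l : Fin c) : Fin.cast h (Fin.natAdd (a + b) l) = Fin.natAdd a (Fin.natAdd b l) :=
    Fin.ext (Nat.add_assoc a b l)
  simp only [Function.comp_def, finCongr_apply, e₁, e₂, e₃]

theorem nsmul_castRaw_wedgeRaw_wedgeRaw_swap (μ : E₂ →ₗ[ℝ] F →ₗ[ℝ] W)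
    (ν : E₁ →ₗ[ℝ] E₃ →ₗ[ℝ] F) (h₁ : IsAntisymmetric ω₁) (h₂ : IsAntisymmetric ω₂)
    (h₃ : IsAntisymmetric ω₃) (h : b + (a + c) = a + (b + c)) (v : Fin (a + (b + c)) → V) :
    (a ! * b ! * c !) • castRaw h (wedgeRaw μ ω₂ (wedgeRaw ν ω₁ ω₃)) v
      = (-1 : ℝ) ^ (a * b) • antisymmetrize (fun u => μ (ω₂ (u ∘ Fin.natAdd a ∘ Fin.castAdd c))
          (ν (ω₁ (u ∘ Fin.castAdd (b + c))) (ω₃ (u ∘ Fin.natAdd a ∘ Fin.natAdd b)))) v := by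
  change _ • wedgeRaw μ ω₂ (wedgeRaw ν ω₁ ω₃) (v ∘ finCongr h) = _
  rw [Nat.mul_comm a !, nsmul_wedgeRaw_wedgeRaw_right μ ν h₂ h₁ h₃, antisymmetrize_comp_equiv]
  rw [show (-1 : ℝ) ^ (a * b) = ((sign (blockSwap a b c) : ℤ) : ℝ) by simp [sign_blockSwap],
    Int.cast_smul_eq_zsmul, ← Units.smul_def, ← antisymmetrize_precomp_perm]
  simp only [Function.comp_def, blockSwap_castAdd h, blockSwap_natAdd_castAdd h,
    blockSwap_natAdd_natAdd h, finCongr_apply]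

end Associativity

end ShuffleWedge

open ShuffleWedge

/-- if `▷ : D × E → E`, `▷ : D × F → F` are bilinear and `{,} : E × E → F`
is bilinear with the derivation property `X ▷ {Y₁,Y₂} = {X ▷ Y₁, Y₂} + {Y₁, X ▷ Y₂}`, then
for a `D`-valued alternating `k`-form `A` and `E`-valued alternating forms `B₁`, `B₂` of
degrees `t₁`, `t₂` on `V`,
`A ∧^▷ (B₁ ∧^{{,}} B₂) = (A ∧^▷ B₁) ∧^{{,}} B₂ + (−1)^{k t₁} B₁ ∧^{{,}} (A ∧^▷ B₂)`. -/
theorem stmt7 {V D E F : Type*} [AddCommGroup V] [Module ℝ V]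
    [AddCommGroup D] [Module ℝ D] [AddCommGroup E] [Module ℝ E]
    [AddCommGroup F] [Module ℝ F]
    (ρE : D →ₗ[ℝ] E →ₗ[ℝ] E) (ρF : D →ₗ[ℝ] F →ₗ[ℝ] F) (pf : E →ₗ[ℝ] E →ₗ[ℝ] F)
    (hder : ∀ (X : D) (Y₁ Y₂ : E), ρF X (pf Y₁ Y₂) = pf (ρE X Y₁) Y₂ + pf Y₁ (ρE X Y₂))
    {k t₁ t₂ : ℕ} (A : AlternatingMap ℝ V D (Fin k))
    (B₁ : AlternatingMap ℝ V E (Fin t₁)) (B₂ : AlternatingMap ℝ V E (Fin t₂)) :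
    wedgeRaw ρF ⇑A (wedgeRaw pf ⇑B₁ ⇑B₂)
      = castRaw (show k + t₁ + t₂ = k + (t₁ + t₂) by omega)
          (wedgeRaw pf (wedgeRaw ρE ⇑A ⇑B₁) ⇑B₂)
        + (-1 : ℝ) ^ (k * t₁) • castRaw (show t₁ + (k + t₂) = k + (t₁ + t₂) by omega)
          (wedgeRaw pf ⇑B₁ (wedgeRaw ρE ⇑A ⇑B₂)) := by
  funext v
  apply eq_of_nsmul_eq_nsmul (by positivity : k ! * t₁ ! * t₂ ! ≠ 0)
  rw [Pi.add_apply, Pi.smul_apply, smul_add, smul_comm _ ((-1 : ℝ) ^ (k * t₁)),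
    nsmul_wedgeRaw_wedgeRaw_right ρF pf A.isAntisymmetric B₁.isAntisymmetric B₂.isAntisymmetric,
    nsmul_castRaw_wedgeRaw_wedgeRaw_left pf ρE A.isAntisymmetric B₁.isAntisymmetric
      B₂.isAntisymmetric,
    nsmul_castRaw_wedgeRaw_wedgeRaw_swap pf ρE A.isAntisymmetric B₁.isAntisymmetric
      B₂.isAntisymmetric, smul_smul, ← mul_pow, neg_one_mul, neg_neg, one_pow, one_smul,
    ← antisymmetrize_add]
  simp only [hder]
end

section
/- Let V, h, l be real vector spaces, {,} : h × h → l bilinear, ⟨,⟩_h a symmetric bilinear form on h, ⟨,⟩_l a symmetric bilinear form on l, and η₁, η₂ : l × h → h bilinear maps satisfying ⟨{Y, Y'}, Z⟩_l = −⟨Y, η₁(Z, Y')⟩_h = −⟨Y', η₂(Z, Y)⟩_h for all Y, Y' ∈ h and Z ∈ l. For an l-valued alternating q-form C and an h-valued alternating t-form B on V define η̄ᵢ(C, B) := C ∧_{ηᵢ} B (an h-valued (q+t)-form). Then for h-valued forms B₁, B₂ of degrees t₁, t₂ and an l-valued q-form C, ⟨B₁ ∧^{{,}} B₂, C⟩ =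 (−1)^{t₂q+1} ⟨B₁, η̄₁(C, B₂)⟩ = (−1)^{t₁(t₂+q)+1} ⟨B₂, η̄₂(C, B₁)⟩, where ⟨,⟩ on forms denotes wedge along ⟨,⟩_l (when both arguments are l-valued) or along ⟨,⟩_h (when both are h-valued). -/
open Equiv Equiv.Perm Finset Function
open scoped Nat

section Shuffles

variable {a b : ℕ}

def finAddPerm (π : Perm (Fin a)) (ρ : Perm (Fin b)) : Perm (Fin (a + b)) :=
  finSumFinEquiv.permCongr (π.sumCongr ρ)

@[simp] lemma finAddPerm_castAdd (π : Perm (Fin a)) (ρ : Perm (Fin b)) (i : Fin a) :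
    finAddPerm π ρ (Fin.castAdd b i) = Fin.castAdd b (π i) := by
  simp [finAddPerm, permCongr_apply]

@[simp] lemma finAddPerm_natAdd (π : Perm (Fin a)) (ρ : Perm (Fin b)) (j : Fin b) :
    finAddPerm π ρ (Fin.natAdd a j) = Fin.natAdd a (ρ j) := by
  simp [finAddPerm, permCongr_apply]

lemma finAddPerm_comp_castAdd (π : Perm (Fin a)) (ρ : Perm (Fin b)) :
    finAddPerm π ρ ∘ Fin.castAdd b = Fin.castAdd b ∘ π := by
  funext i; simp

lemma finAddPerm_comp_natAdd (π : Perm (Fin a)) (ρ : Perm (Fin b)) :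
    finAddPerm π ρ ∘ Fin.natAdd a = Fin.natAdd a ∘ ρ := by
  funext j; simp

@[simp] lemma sign_finAddPerm (π : Perm (Fin a)) (ρ : Perm (Fin b)) :
    sign (finAddPerm π ρ) = sign π * sign ρ := by
  rw [finAddPerm, sign_permCongr, sign_sumCongr]

lemma finAddPerm_injective {π π' : Perm (Fin a)} {ρ ρ' : Perm (Fin b)}
    (h : finAddPerm π ρ = finAddPerm π' ρ') : π = π' ∧ ρ = ρ' := by
  refine ⟨Equiv.ext fun i => ?_, Equiv.ext fun j => ?_⟩
  · simpa using congr($h (Fin.castAdd b i))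
  · simpa using congr($h (Fin.natAdd a j))

lemma mem_shuffleSet {σ : Perm (Fin (a + b))} :
    σ ∈ shuffleSet a b ↔ StrictMono (σ ∘ Fin.castAdd b) ∧ StrictMono (σ ∘ Fin.natAdd a) := by
  simp [shuffleSet, StrictMono]

lemma range_comp_natAdd_eq_compl (σ : Perm (Fin (a + b))) :
    Set.range (σ ∘ Fin.natAdd a) = (Set.range (σ ∘ Fin.castAdd b))ᶜ := by
  have : Set.range (Fin.natAdd a : Fin b → Fin (a + b)) = (Set.range (Fin.castAdd b))ᶜ := by
    ext x
    induction x using Fin.addCases <;> simp [Fin.ext_iff] <;> omega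
  rw [Set.range_comp, Set.range_comp, this, Set.image_compl_eq σ.bijective]

lemma eq_of_mem_shuffleSet_of_range_eq {s s' : Perm (Fin (a + b))} (hs : s ∈ shuffleSet a b)
    (hs' : s' ∈ shuffleSet a b)
    (h : Set.range (s ∘ Fin.castAdd b) = Set.range (s' ∘ Fin.castAdd b)) : s = s' := by
  rw [mem_shuffleSet] at hs hs'
  have hleft := (hs.1.range_inj hs'.1).1 h
  have hright := (hs.2.range_inj hs'.2).1 (by
    rw [range_comp_natAdd_eq_compl, range_comp_natAdd_eq_compl, h])
  ext x
  induction x using Fin.addCases with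
  | left i => exact congr(($hleft i : ℕ))
  | right j => exact congr(($hright j : ℕ))

def shuffleOfFinset (S : Finset (Fin (a + b))) (ha : #S = a) (hb : #Sᶜ = b) :
    Perm (Fin (a + b)) :=
  finSumFinEquiv.symm.trans (finSumEquivOfFinset ha hb)

lemma shuffleOfFinset_mem (S : Finset (Fin (a + b))) (ha : #S = a) (hb : #Sᶜ = b) :
    shuffleOfFinset S ha hb ∈ shuffleSet a b := by
  rw [mem_shuffleSet]
  constructor <;> intro i j hij
  · simpa [shuffleOfFinset, finSumEquivOfFinset_inl] using (S.orderEmbOfFin ha).strictMono hij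
  · simpa [shuffleOfFinset, finSumEquivOfFinset_inr] using (Sᶜ.orderEmbOfFin hb).strictMono hij

lemma range_shuffleOfFinset_comp_castAdd (S : Finset (Fin (a + b))) (ha : #S = a)
    (hb : #Sᶜ = b) : Set.range (shuffleOfFinset S ha hb ∘ Fin.castAdd b) = S := by
  have : shuffleOfFinset S ha hb ∘ Fin.castAdd b = S.orderEmbOfFin ha := by
    funext i
    simp [shuffleOfFinset, finSumEquivOfFinset_inl]
  rw [this, Finset.range_orderEmbOfFin]

lemma card_shuffleSet : #(shuffleSet a b) = (a + b).choose a := by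
  rw [show (a + b).choose a = #(powersetCard a (univ : Finset (Fin (a + b)))) by simp]
  refine Finset.card_bij (fun s _ => univ.map ((Fin.castAddEmb b).trans s.toEmbedding))
    (fun s _ => by simp [Finset.mem_powersetCard]) (fun s hs s' hs' h => ?_) (fun S hS => ?_)
  · refine eq_of_mem_shuffleSet_of_range_eq hs hs' ?_
    have := congr(($h : Set (Fin (a + b))))
    simp only [coe_map, coe_univ, Set.image_univ] at this
    exact this
  · rw [Finset.mem_powersetCard] at hS
    have hb : #Sᶜ = b := by simp [Finset.card_compl, hS.2]
    refine ⟨shuffleOfFinset S hS.2 hb, shuffleOfFinset_mem S hS.2 hb, Finset.coe_injective ?_⟩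
    simp only [coe_map, coe_univ, Set.image_univ]
    exact range_shuffleOfFinset_comp_castAdd S hS.2 hb

lemma sum_perm_eq_sum_shuffleSet {M : Type*} [AddCommMonoid M] (f : Perm (Fin (a + b)) → M) :
    ∑ σ, f σ = ∑ s ∈ shuffleSet a b, ∑ π, ∑ ρ, f (s * finAddPerm π ρ) := by
  set g : Perm (Fin (a + b)) × Perm (Fin a) × Perm (Fin b) → Perm (Fin (a + b)) :=
    fun p => p.1 * finAddPerm p.2.1 p.2.2
  have hrange (s : Perm (Fin (a + b))) (π : Perm (Fin a)) (ρ : Perm (Fin b)) :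
      Set.range (⇑(s * finAddPerm π ρ) ∘ Fin.castAdd b) = Set.range (s ∘ Fin.castAdd b) := by
    rw [coe_mul, comp_assoc, finAddPerm_comp_castAdd, ← comp_assoc, π.surjective.range_comp]
  have hinj : Set.InjOn g ↑(shuffleSet a b ×ˢ (univ : Finset (Perm (Fin a) × Perm (Fin b)))) := by
    rintro ⟨s, π, ρ⟩ hp ⟨s', π', ρ'⟩ hp' h
    simp only [coe_product, Set.mem_prod, mem_coe, g] at hp hp' h
    obtain rfl : s = s' := eq_of_mem_shuffleSet_of_range_eq hp.1 hp'.1 (by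
      rw [← hrange s π ρ, ← hrange s' π' ρ', h])
    obtain ⟨rfl, rfl⟩ := finAddPerm_injective (mul_left_cancel h)
    rfl
  have himage : (shuffleSet a b ×ˢ univ).image g = univ := by
    refine eq_univ_of_card _ ?_
    rw [card_image_of_injOn hinj, card_product, card_univ, Fintype.card_prod,
      card_shuffleSet]
    simp only [Fintype.card_perm, Fintype.card_fin]
    rw [← mul_assoc, Nat.choose_symm_add, Nat.add_choose_mul_factorial_mul_factorial]
  rw [← himage, sum_image hinj, sum_product]
  simp only [Fintype.sum_prod_type, g]

end Shuffles

section Antisymmetrization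

variable {ι κ V W : Type*} [Fintype ι] [DecidableEq ι] [Fintype κ] [DecidableEq κ]
  [AddCommGroup W]

def IsAntisymmetric (Φ : (ι → V) → W) : Prop :=
  ∀ (v : ι → V) (σ : Perm ι), Φ (v ∘ σ) = sign σ • Φ v

def altSum (Φ : (ι → V) → W) (v : ι → V) : W :=
  ∑ σ : Perm ι, sign σ • Φ (v ∘ σ)

lemma AlternatingMap.isAntisymmetric_s12 {R M : Type*} [CommSemiring R] [AddCommMonoid M]
    [Module R M] [Module R W] (f : M [⋀^ι]→ₗ[R] W) : IsAntisymmetric (f : (ι → M) → W) :=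
  f.map_perm

lemma altSum_neg (Φ : (ι → V) → W) : altSum (fun v => -Φ v) = -altSum Φ := by
  funext v
  unfold altSum
  rw [Pi.neg_apply, ← Finset.sum_neg_distrib]
  exact Finset.sum_congr rfl fun σ _ => smul_neg (sign σ) _

lemma altSum_nsmul (n : ℕ) (Φ : (ι → V) → W) : altSum (n • Φ) = n • altSum Φ := by
  funext v
  simp only [altSum, Pi.smul_apply, Finset.smul_sum]
  exact Finset.sum_congr rfl fun σ _ => smul_comm _ _ _

lemma altSum_comp_perm (Φ : (ι → V) → W) (π : Perm ι) :
    altSum (fun v => Φ (v ∘ π)) = sign π • altSum Φ := by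
  funext v
  simp only [altSum, Pi.smul_apply, Finset.smul_sum]
  refine Fintype.sum_equiv (Equiv.mulRight π) _ _ fun σ => ?_
  rw [coe_mulRight, Perm.sign_mul, coe_mul, smul_smul, mul_left_comm, Int.units_mul_self, mul_one]
  rfl

lemma isAntisymmetric_altSum (Φ : (ι → V) → W) : IsAntisymmetric (altSum Φ) := by
  intro v π
  simp only [altSum, Finset.smul_sum]
  refine Fintype.sum_equiv (Equiv.mulLeft π) _ _ fun σ => ?_
  rw [coe_mulLeft, Perm.sign_mul, coe_mul, smul_smul, ← mul_assoc, Int.units_mul_self, one_mul]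
  rfl

lemma altSum_comp_equiv (e : κ ≃ ι) (Φ : (ι → V) → W) (v : ι → V) :
    altSum (fun u : κ → V => Φ (u ∘ e.symm)) (v ∘ e) = altSum Φ v :=
  Fintype.sum_equiv (permCongr e) _ _ fun τ => by
    rw [sign_permCongr]
    rfl

lemma altSum_sum_sign_smul_comp (g : Perm κ → Perm ι) (hg : ∀ τ, sign (g τ) = sign τ)
    (Φ : (ι → V) → W) :
    altSum (fun v => ∑ τ : Perm κ, sign τ • Φ (v ∘ g τ)) =
      Fintype.card (Perm κ) • altSum Φ := by
  funext v
  have hterm (τ : Perm κ) :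
      ∑ σ : Perm ι, sign σ • sign τ • Φ (v ∘ σ ∘ g τ) = altSum Φ v := by
    calc ∑ σ : Perm ι, sign σ • sign τ • Φ (v ∘ σ ∘ g τ)
        = sign τ • altSum (fun u => Φ (u ∘ g τ)) v := by
          simp only [altSum, Finset.smul_sum, smul_comm (sign τ)]
          rfl
      _ = altSum Φ v := by
          rw [altSum_comp_perm, hg, Pi.smul_apply, smul_smul, Int.units_mul_self, one_smul]
  simp only [altSum, Finset.smul_sum]
  rw [Finset.sum_comm]
  simp only [comp_assoc, hterm, sum_const, card_univ, Pi.smul_apply]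

end Antisymmetrization

lemma nsmul_right_injective_of_module_real {W : Type*} [AddCommGroup W] [Module ℝ W] {n : ℕ}
    (hn : n ≠ 0) : Injective (fun x : W => n • x) := by
  intro x y h
  simp only [← Nat.cast_smul_eq_nsmul ℝ n] at h
  exact smul_right_injective W (Nat.cast_ne_zero.2 hn) h

section Wedge

variable {V E F G H W : Type*} [AddCommGroup E] [Module ℝ E] [AddCommGroup F] [Module ℝ F]
  [AddCommGroup G] [Module ℝ G] [AddCommGroup H] [Module ℝ H] [AddCommGroup W] [Module ℝ W]
  {a b c : ℕ}

def prodRaw (μ : E →ₗ[ℝ] F →ₗ[ℝ] W) (ω : (Fin a → V) → E) (η : (Fin b → V) → F) :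
    (Fin (a + b) → V) → W :=
  fun v => μ (ω (v ∘ Fin.castAdd b)) (η (v ∘ Fin.natAdd a))

lemma wedgeRaw_eq_sum (μ : E →ₗ[ℝ] F →ₗ[ℝ] W) (ω : (Fin a → V) → E) (η : (Fin b → V) → F)
    (v : Fin (a + b) → V) :
    wedgeRaw μ ω η v = ∑ s ∈ shuffleSet a b, sign s • prodRaw μ ω η (v ∘ s) := by
  simp only [wedgeRaw, prodRaw, Units.smul_def]
  rfl

lemma prodRaw_nsmul_left (μ : E →ₗ[ℝ] F →ₗ[ℝ] W) (n : ℕ) (ω : (Fin a → V) → E)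
    (η : (Fin b → V) → F) : prodRaw μ (n • ω) η = n • prodRaw μ ω η := by
  funext v
  simp [prodRaw]

lemma prodRaw_nsmul_right (μ : E →ₗ[ℝ] F →ₗ[ℝ] W) (n : ℕ) (ω : (Fin a → V) → E)
    (η : (Fin b → V) → F) : prodRaw μ ω (n • η) = n • prodRaw μ ω η := by
  funext v
  simp [prodRaw]

lemma prodRaw_comp_finAddPerm (μ : E →ₗ[ℝ] F →ₗ[ℝ] W) {ω : (Fin a → V) → E}
    {η : (Fin b → V) → F} (hω : IsAntisymmetric ω) (hη : IsAntisymmetric η)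
    (v : Fin (a + b) → V) (π : Perm (Fin a)) (ρ : Perm (Fin b)) :
    prodRaw μ ω η (v ∘ finAddPerm π ρ) = (sign π * sign ρ) • prodRaw μ ω η v := by
  simp only [prodRaw, comp_assoc, finAddPerm_comp_castAdd, finAddPerm_comp_natAdd]
  rw [← comp_assoc, hω, ← comp_assoc, hη]
  simp only [Units.smul_def, map_zsmul, LinearMap.smul_apply, smul_smul, Units.val_mul, mul_comm]

theorem factorial_mul_factorial_smul_wedgeRaw (μ : E →ₗ[ℝ] F →ₗ[ℝ] W)
    {ω : (Fin a → V) → E} {η : (Fin b → V) → F} (hω : IsAntisymmetric ω)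
    (hη : IsAntisymmetric η) : (a ! * b !) • wedgeRaw μ ω η = altSum (prodRaw μ ω η) := by
  funext v
  have hterm (s : Perm (Fin (a + b))) (π : Perm (Fin a)) (ρ : Perm (Fin b)) :
      sign (s * finAddPerm π ρ) • prodRaw μ ω η (v ∘ ⇑(s * finAddPerm π ρ)) =
        sign s • prodRaw μ ω η (v ∘ s) := by
    rw [Perm.sign_mul, sign_finAddPerm, coe_mul, ← comp_assoc,
      prodRaw_comp_finAddPerm μ hω hη, smul_smul, mul_assoc, Int.units_mul_self, mul_one]
  rw [Pi.smul_apply, altSum, sum_perm_eq_sum_shuffleSet, wedgeRaw_eq_sum, Finset.smul_sum]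
  refine Finset.sum_congr rfl fun s _ => ?_
  simp only [hterm, sum_const, card_univ, Fintype.card_perm, Fintype.card_fin, smul_smul]

lemma isAntisymmetric_wedgeRaw (μ : E →ₗ[ℝ] F →ₗ[ℝ] W) {ω : (Fin a → V) → E}
    {η : (Fin b → V) → F} (hω : IsAntisymmetric ω) (hη : IsAntisymmetric η) :
    IsAntisymmetric (wedgeRaw μ ω η) := by
  intro v σ
  have h := factorial_mul_factorial_smul_wedgeRaw μ hω hη
  apply nsmul_right_injective_of_module_real (n := a ! * b !) (by positivity)
  simp only
  rw [smul_comm, ← Pi.smul_apply _ _ v, ← Pi.smul_apply _ _ (v ∘ σ), h,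
    isAntisymmetric_altSum]

lemma altSum_prodRaw_altSum_left (μ : E →ₗ[ℝ] F →ₗ[ℝ] W) (Φ : (Fin a → V) → E)
    (η : (Fin b → V) → F) :
    altSum (prodRaw μ (altSum Φ) η) = a ! • altSum (prodRaw μ Φ η) := by
  have h : prodRaw μ (altSum Φ) η =
      fun v => ∑ τ : Perm (Fin a), sign τ • prodRaw μ Φ η (v ∘ finAddPerm τ 1) := by
    funext v
    simp only [prodRaw, altSum, map_sum, LinearMap.sum_apply, Units.smul_def, map_zsmul,
      LinearMap.smul_apply, comp_assoc, finAddPerm_comp_castAdd, finAddPerm_comp_natAdd,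
      coe_one, comp_id]
  rw [h, altSum_sum_sign_smul_comp _ (by simp), Fintype.card_perm, Fintype.card_fin]

lemma altSum_prodRaw_altSum_right (μ : E →ₗ[ℝ] F →ₗ[ℝ] W) (ω : (Fin a → V) → E)
    (Φ : (Fin b → V) → F) :
    altSum (prodRaw μ ω (altSum Φ)) = b ! • altSum (prodRaw μ ω Φ) := by
  have h : prodRaw μ ω (altSum Φ) =
      fun v => ∑ τ : Perm (Fin b), sign τ • prodRaw μ ω Φ (v ∘ finAddPerm 1 τ) := by
    funext v
    simp only [prodRaw, altSum, map_sum, Units.smul_def, map_zsmul, comp_assoc,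
      finAddPerm_comp_castAdd, finAddPerm_comp_natAdd, coe_one, comp_id]
  rw [h, altSum_sum_sign_smul_comp _ (by simp), Fintype.card_perm, Fintype.card_fin]

theorem factorial_smul_wedgeRaw_wedgeRaw_left (μ₂ : G →ₗ[ℝ] H →ₗ[ℝ] W)
    (μ₁ : E →ₗ[ℝ] F →ₗ[ℝ] G) {ω₁ : (Fin a → V) → E} {ω₂ : (Fin b → V) → F}
    {η : (Fin c → V) → H} (hω₁ : IsAntisymmetric ω₁) (hω₂ : IsAntisymmetric ω₂)
    (hη : IsAntisymmetric η) :
    (a ! * b ! * c !) • wedgeRaw μ₂ (wedgeRaw μ₁ ω₁ ω₂) η =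
      altSum (prodRaw μ₂ (prodRaw μ₁ ω₁ ω₂) η) := by
  apply nsmul_right_injective_of_module_real (n := (a + b)!) (by positivity)
  calc (a + b)! • (a ! * b ! * c !) • wedgeRaw μ₂ (wedgeRaw μ₁ ω₁ ω₂) η
      = (a ! * b !) • ((a + b)! * c !) • wedgeRaw μ₂ (wedgeRaw μ₁ ω₁ ω₂) η := by
        rw [smul_smul, smul_smul]
        ring_nf
    _ = altSum (prodRaw μ₂ ((a ! * b !) • wedgeRaw μ₁ ω₁ ω₂) η) := by
        rw [factorial_mul_factorial_smul_wedgeRaw μ₂ (isAntisymmetric_wedgeRaw μ₁ hω₁ hω₂) hη,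
          prodRaw_nsmul_left, altSum_nsmul]
    _ = (a + b)! • altSum (prodRaw μ₂ (prodRaw μ₁ ω₁ ω₂) η) := by
        rw [factorial_mul_factorial_smul_wedgeRaw μ₁ hω₁ hω₂, altSum_prodRaw_altSum_left]

theorem factorial_smul_wedgeRaw_wedgeRaw_right (μ₂ : E →ₗ[ℝ] G →ₗ[ℝ] W)
    (μ₁ : F →ₗ[ℝ] H →ₗ[ℝ] G) {ω : (Fin a → V) → E} {η₁ : (Fin b → V) → F}
    {η₂ : (Fin c → V) → H} (hω : IsAntisymmetric ω) (hη₁ : IsAntisymmetric η₁)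
    (hη₂ : IsAntisymmetric η₂) :
    (a ! * b ! * c !) • wedgeRaw μ₂ ω (wedgeRaw μ₁ η₁ η₂) =
      altSum (prodRaw μ₂ ω (prodRaw μ₁ η₁ η₂)) := by
  apply nsmul_right_injective_of_module_real (n := (b + c)!) (by positivity)
  calc (b + c)! • (a ! * b ! * c !) • wedgeRaw μ₂ ω (wedgeRaw μ₁ η₁ η₂)
      = (b ! * c !) • (a ! * (b + c)!) • wedgeRaw μ₂ ω (wedgeRaw μ₁ η₁ η₂) := by
        rw [smul_smul, smul_smul]
        ring_nf
    _ = altSum (prodRaw μ₂ ω ((b ! * c !) • wedgeRaw μ₁ η₁ η₂)) := by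
        rw [factorial_mul_factorial_smul_wedgeRaw μ₂ hω (isAntisymmetric_wedgeRaw μ₁ hη₁ hη₂),
          prodRaw_nsmul_right, altSum_nsmul]
    _ = (b + c)! • altSum (prodRaw μ₂ ω (prodRaw μ₁ η₁ η₂)) := by
        rw [factorial_mul_factorial_smul_wedgeRaw μ₁ hη₁ hη₂, altSum_prodRaw_altSum_right]

end Wedge

section BlockSwap

variable {m n : ℕ}

def swapBlocks (m n : ℕ) : Perm (Fin (m + n)) :=
  finAddFlip.trans (finCongr (Nat.add_comm n m))

@[simp] lemma swapBlocks_castAdd (i : Fin m) :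
    swapBlocks m n (Fin.castAdd n i) = Fin.cast (Nat.add_comm n m) (Fin.natAdd n i) := by
  simp [swapBlocks]

@[simp] lemma swapBlocks_natAdd (j : Fin n) :
    swapBlocks m n (Fin.natAdd m j) = Fin.cast (Nat.add_comm n m) (Fin.castAdd m j) := by
  simp [swapBlocks]

lemma val_finRotate_pow (k : ℕ) (i : Fin n) : ((finRotate n ^ k) i : ℕ) = (i + k) % n := by
  induction k with
  | zero => simp [Nat.mod_eq_of_lt i.isLt]
  | succ k ih =>
    have := i.neZero
    rw [pow_succ', Perm.mul_apply, finRotate_apply, Fin.val_add, ih, Fin.val_one',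
      Nat.add_mod_mod, Nat.mod_add_mod, Nat.add_assoc]

lemma swapBlocks_eq_finRotate_pow : swapBlocks m n = finRotate (m + n) ^ n := by
  ext x
  rw [val_finRotate_pow]
  induction x using Fin.addCases with
  | left i =>
    simp only [swapBlocks_castAdd, Fin.val_cast, Fin.val_castAdd, Fin.val_natAdd]
    rw [Nat.mod_eq_of_lt (by omega), Nat.add_comm]
  | right j =>
    simp only [swapBlocks_natAdd, Fin.val_cast, Fin.val_castAdd, Fin.val_natAdd]
    rw [show m + j + n = j + (m + n) by omega, Nat.add_mod_right, Nat.mod_eq_of_lt (by omega)]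

lemma sign_swapBlocks : sign (swapBlocks m n) = (-1) ^ (m * n) := by
  rw [swapBlocks_eq_finRotate_pow, map_pow, sign_finRotate, ← pow_mul]
  rcases n with _ | n
  · simp
  · rw [show (m + (n + 1) - 1) * (n + 1) = m * (n + 1) + n * (n + 1) by
        rw [← add_mul, show m + (n + 1) - 1 = m + n by omega],
      pow_add, (Nat.even_mul_succ_self n).neg_one_pow, mul_one]

end BlockSwap

section BlockPermutations

variable {a b c : ℕ}

def finAddAssoc (a b c : ℕ) : Fin (a + b + c) ≃ Fin (a + (b + c)) :=
  finCongr (Nat.add_assoc a b c)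

@[simp] lemma finAddAssoc_castAdd_castAdd (i : Fin a) :
    finAddAssoc a b c (Fin.castAdd c (Fin.castAdd b i)) = Fin.castAdd (b + c) i := rfl

@[simp] lemma finAddAssoc_castAdd_natAdd (j : Fin b) :
    finAddAssoc a b c (Fin.castAdd c (Fin.natAdd a j)) = Fin.natAdd a (Fin.castAdd c j) := rfl

@[simp] lemma finAddAssoc_natAdd (k : Fin c) :
    finAddAssoc a b c (Fin.natAdd (a + b) k) = Fin.natAdd a (Fin.natAdd b k) :=
  Fin.ext (Nat.add_assoc a b k)

@[simp] lemma val_finAddAssoc_symm (x : Fin (a + (b + c))) :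
    ((finAddAssoc a b c).symm x : ℕ) = x := rfl

def swapLastBlocks (a b c : ℕ) : Perm (Fin (a + b + c)) :=
  (finAddAssoc a b c).symm.permCongr (finAddPerm 1 (swapBlocks b c))

def rotateFirstBlock (a b c : ℕ) : Perm (Fin (a + b + c)) :=
  (finAddAssoc a b c).symm.permCongr (swapBlocks a (b + c))

lemma sign_swapLastBlocks : sign (swapLastBlocks a b c) = (-1) ^ (b * c) := by
  simp [swapLastBlocks, sign_swapBlocks]

lemma sign_rotateFirstBlock : sign (rotateFirstBlock a b c) = (-1) ^ (a * (b + c)) := by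
  simp [rotateFirstBlock, sign_swapBlocks]

@[simp] lemma val_swapLastBlocks_castAdd_castAdd (i : Fin a) :
    (swapLastBlocks a b c (Fin.castAdd c (Fin.castAdd b i)) : ℕ) = i := by
  simp [swapLastBlocks, permCongr_apply]

@[simp] lemma val_swapLastBlocks_castAdd_natAdd (j : Fin b) :
    (swapLastBlocks a b c (Fin.castAdd c (Fin.natAdd a j)) : ℕ) = a + (c + j) := by
  simp [swapLastBlocks, permCongr_apply]
  omega

@[simp] lemma val_swapLastBlocks_natAdd (k : Fin c) :
    (swapLastBlocks a b c (Fin.natAdd (a + b) k) : ℕ) = a + k := by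
  simp [swapLastBlocks, permCongr_apply]

@[simp] lemma val_rotateFirstBlock_castAdd_castAdd (i : Fin a) :
    (rotateFirstBlock a b c (Fin.castAdd c (Fin.castAdd b i)) : ℕ) = b + (c + i) := by
  simp [rotateFirstBlock, permCongr_apply]
  omega

@[simp] lemma val_rotateFirstBlock_castAdd_natAdd (j : Fin b) :
    (rotateFirstBlock a b c (Fin.castAdd c (Fin.natAdd a j)) : ℕ) = j := by
  simp [rotateFirstBlock, permCongr_apply]

@[simp] lemma val_rotateFirstBlock_natAdd (k : Fin c) :
    (rotateFirstBlock a b c (Fin.natAdd (a + b) k) : ℕ) = b + k := by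
  simp [rotateFirstBlock, permCongr_apply]

end BlockPermutations

lemma eq_neg_one_pow_smul_castRaw_of_altSum {V W : Type*} [AddCommGroup W] [Module ℝ W]
    {m n N k : ℕ} (hN : N ≠ 0) (h : m = n) {A T : (Fin n → V) → W} {B Ψ : (Fin m → V) → W}
    (hA : N • A = altSum T) (hB : N • B = altSum Ψ) (π : Perm (Fin n))
    (hπ : sign π = (-1) ^ k) (hΨ : ∀ u, Ψ u = -T (u ∘ (finCongr h).symm ∘ π)) :
    A = (-1 : ℝ) ^ (k + 1) • castRaw h B := by
  funext v
  have hBv : N • B (v ∘ finCongr h) = -((-1) ^ k • N • A v) := by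
    have hΨ' : Ψ = fun u => -(fun w => T (w ∘ π)) (u ∘ (finCongr h).symm) := funext hΨ
    rw [← Pi.smul_apply, hB, hΨ', altSum_neg, Pi.neg_apply,
      altSum_comp_equiv (finCongr h) (fun w => T (w ∘ π)), altSum_comp_perm, ← hA, hπ]
    rfl
  apply nsmul_right_injective_of_module_real hN
  simp only [Pi.smul_apply]
  rw [smul_comm, show castRaw h B v = B (v ∘ finCongr h) from rfl, hBv,
    ← Int.cast_smul_eq_zsmul ℝ, smul_neg, ← neg_smul, smul_smul]
  push_cast
  rw [pow_succ, mul_neg_one, neg_neg, ← pow_add, ← two_mul, pow_mul, neg_one_sq, one_pow,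
    one_smul]

section Pairing

variable {V h l : Type*} [AddCommGroup V] [Module ℝ V] [AddCommGroup h] [Module ℝ h]
  [AddCommGroup l] [Module ℝ l] (pf : h →ₗ[ℝ] h →ₗ[ℝ] l) (Bh : h →ₗ[ℝ] h →ₗ[ℝ] ℝ)
  (Bl : l →ₗ[ℝ] l →ₗ[ℝ] ℝ) (η : l →ₗ[ℝ] h →ₗ[ℝ] h) {q t₁ t₂ : ℕ}
  (C : AlternatingMap ℝ V l (Fin q)) (B₁ : AlternatingMap ℝ V h (Fin t₁))
  (B₂ : AlternatingMap ℝ V h (Fin t₂))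

lemma wedgeRaw_pairing_eq_of_adjoint_left
    (hη : ∀ (Y Y' : h) (Z : l), Bl (pf Y Y') Z = - Bh Y (η Z Y')) :
    wedgeRaw Bl (wedgeRaw pf ⇑B₁ ⇑B₂) ⇑C
      = (-1 : ℝ) ^ (t₂ * q + 1) •
          castRaw (show t₁ + (q + t₂) = t₁ + t₂ + q by ring)
            (wedgeRaw Bh ⇑B₁ (wedgeRaw η ⇑C ⇑B₂)) := by
  have hB := factorial_smul_wedgeRaw_wedgeRaw_right Bh η B₁.isAntisymmetric_s12
    C.isAntisymmetric_s12 B₂.isAntisymmetric_s12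
  rw [mul_right_comm] at hB
  refine eq_neg_one_pow_smul_castRaw_of_altSum (by positivity) _
    (factorial_smul_wedgeRaw_wedgeRaw_left Bl pf B₁.isAntisymmetric_s12 B₂.isAntisymmetric_s12
      C.isAntisymmetric_s12) hB (swapLastBlocks t₁ t₂ q) sign_swapLastBlocks fun u => ?_
  simp only [prodRaw, comp_def, hη, neg_neg]
  congr <;> funext i <;> congr 1 <;> ext <;> simp

lemma wedgeRaw_pairing_eq_of_adjoint_right
    (hη : ∀ (Y Y' : h) (Z : l), Bl (pf Y Y') Z = - Bh Y' (η Z Y)) :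
    wedgeRaw Bl (wedgeRaw pf ⇑B₁ ⇑B₂) ⇑C
      = (-1 : ℝ) ^ (t₁ * (t₂ + q) + 1) •
          castRaw (show t₂ + (q + t₁) = t₁ + t₂ + q by ring)
            (wedgeRaw Bh ⇑B₂ (wedgeRaw η ⇑C ⇑B₁)) := by
  have hB := factorial_smul_wedgeRaw_wedgeRaw_right Bh η B₂.isAntisymmetric_s12
    C.isAntisymmetric_s12 B₁.isAntisymmetric_s12
  rw [mul_comm, ← mul_assoc] at hB
  refine eq_neg_one_pow_smul_castRaw_of_altSum (by positivity) _
    (factorial_smul_wedgeRaw_wedgeRaw_left Bl pf B₁.isAntisymmetric_s12 B₂.isAntisymmetric_s12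
      C.isAntisymmetric_s12) hB (rotateFirstBlock t₁ t₂ q) sign_rotateFirstBlock fun u => ?_
  simp only [prodRaw, comp_def, hη, neg_neg]
  congr <;> funext i <;> congr 1 <;> ext <;> simp

end Pairing

/-- with `{,} : h × h → l` bilinear, `⟨,⟩_h`, `⟨,⟩_l` symmetric bilinear
forms and `η₁, η₂ : l × h → h` bilinear with
`⟨{Y,Y'}, Z⟩_l = −⟨Y, η₁(Z,Y')⟩_h = −⟨Y', η₂(Z,Y)⟩_h`, setting `η̄ᵢ(C,B) := C ∧_{ηᵢ} B`,
for `h`-valued alternating forms `B₁, B₂` of degrees `t₁, t₂` and an `l`-valued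
alternating `q`-form `C`,
`⟨B₁ ∧^{{,}} B₂, C⟩ = (−1)^{t₂q+1} ⟨B₁, η̄₁(C,B₂)⟩ = (−1)^{t₁(t₂+q)+1} ⟨B₂, η̄₂(C,B₁)⟩`. -/
theorem stmt12 {V h l : Type*} [AddCommGroup V] [Module ℝ V] [AddCommGroup h] [Module ℝ h]
    [AddCommGroup l] [Module ℝ l]
    (pf : h →ₗ[ℝ] h →ₗ[ℝ] l)
    (Bh : h →ₗ[ℝ] h →ₗ[ℝ] ℝ) (Bl : l →ₗ[ℝ] l →ₗ[ℝ] ℝ)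
    (η₁ η₂ : l →ₗ[ℝ] h →ₗ[ℝ] h)
    (hη₁ : ∀ (Y Y' : h) (Z : l), Bl (pf Y Y') Z = - Bh Y (η₁ Z Y'))
    (hη₂ : ∀ (Y Y' : h) (Z : l), Bl (pf Y Y') Z = - Bh Y' (η₂ Z Y))
    {q t₁ t₂ : ℕ} (C : AlternatingMap ℝ V l (Fin q))
    (B₁ : AlternatingMap ℝ V h (Fin t₁)) (B₂ : AlternatingMap ℝ V h (Fin t₂)) :
    wedgeRaw Bl (wedgeRaw pf ⇑B₁ ⇑B₂) ⇑C
      = (-1 : ℝ) ^ (t₂ * q + 1) •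
          castRaw (show t₁ + (q + t₂) = t₁ + t₂ + q by omega)
            (wedgeRaw Bh ⇑B₁ (wedgeRaw η₁ ⇑C ⇑B₂))
    ∧ wedgeRaw Bl (wedgeRaw pf ⇑B₁ ⇑B₂) ⇑C
      = (-1 : ℝ) ^ (t₁ * (t₂ + q) + 1) •
          castRaw (show t₂ + (q + t₁) = t₁ + t₂ + q by omega)
            (wedgeRaw Bh ⇑B₂ (wedgeRaw η₂ ⇑C ⇑B₁)) :=
  ⟨wedgeRaw_pairing_eq_of_adjoint_left pf Bh Bl η₁ C B₁ B₂ hη₁,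
    wedgeRaw_pairing_eq_of_adjoint_right pf Bh Bl η₂ C B₁ B₂ hη₂⟩
end

section
/- Let g be a finite-dimensional real Lie algebra, h and l finite-dimensional real vector spaces, α̃ : h → g and β̃ : l → h linear maps, and ▷ : g × h → h a bilinear map satisfying α̃(X ▷ Y) = [X, α̃(Y)] for all X ∈ g, Y ∈ h. On an open set U ⊆ ℝ^d, let A be a smooth g-valued 1-form, B a smooth h-valued 2-form and C a smooth l-valued 3-form, and set F₁ := dA + ½ A ∧^{[,]} A − α̃ ∘ B and F₂ := dB + A ∧^▷ B − β̃ ∘ C. Then the first 3-Bianchi identity holds: dF₁ + A ∧^{[,]} F₁ = −α̃ ∘ (F₂ + β̃ ∘ C). -/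
/-! The exterior derivative of a smooth vector-valued differential form, given pointwise
by `(dω)_x(v₀,…,v_k) = Σ_{i=0}^{k} (−1)^i (Dω(x)·v_i)(v₀,…,v̂ᵢ,…,v_k)`, where `D` is the
Fréchet derivative and `v̂ᵢ` denotes omission of the `i`-th vector. A smooth `W`-valued
differential `k`-form on an open set `U ⊆ ℝ^d` is a map `ω` from `ℝ^d` to the space of
`W`-valued alternating `k`-forms on `ℝ^d` which is smooth on `U`, smoothness being
expressed by requiring every evaluation `x ↦ ω x v` to be `C^∞` on `U`. -/

/-- The exterior derivative, defined on the underlying functions of vector-valued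
differential forms via the Fréchet derivative. -/
noncomputable def extDerivRaw {X W : Type*} [NormedAddCommGroup X] [NormedSpace ℝ X]
    [NormedAddCommGroup W] [NormedSpace ℝ W] {k : ℕ}
    (ω : X → (Fin k → X) → W) (x : X) : (Fin (k + 1) → X) → W :=
  fun v => ∑ i : Fin (k + 1),
    (-1 : ℤ) ^ (i : ℕ) • fderiv ℝ (fun y => ω y (v ∘ i.succAbove)) x (v i)

/-- A form-valued map is smooth on `U` iff all its evaluations are. -/
def SmoothFormOn {X E : Type*} [NormedAddCommGroup X] [NormedSpace ℝ X]
    [NormedAddCommGroup E] [NormedSpace ℝ E] {k : ℕ}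
    (ω : X → AlternatingMap ℝ X E (Fin k)) (U : Set X) : Prop :=
  ∀ v : Fin k → X, ContDiffOn ℝ (⊤ : ℕ∞) (fun x => ω x v) U

/-! The identity is checked at a point `x`, where `F₁ x` is the sum of `dA`, `½ [A ∧ A]` and
`-α̃ B`. Symmetry of second derivatives gives `d(dA) = 0`; the Leibniz rule
`d[A ∧ A] = [dA ∧ A] - [A ∧ dA]` together with graded antisymmetry `[dA ∧ A] = -[A ∧ dA]` makes
`½ d[A ∧ A]` cancel `[A ∧ dA]`; the Jacobi identity kills `[A ∧ [A ∧ A]]`; and the equivariance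
`α̃ (X ▷ Y) = [X, α̃ Y]` turns the remainder `-α̃ dB - [A ∧ α̃ B]` into
`-α̃ (dB + A ∧^▷ B) = -α̃ (F₂ + β̃ C)`. -/

section WedgeAlgebra

variable {V E F W : Type*} [AddCommGroup E] [Module ℝ E] [AddCommGroup F] [Module ℝ F]
  [AddCommGroup W] [Module ℝ W]

lemma wedgeRaw_one_one_apply (μ : E →ₗ[ℝ] F →ₗ[ℝ] W) (ω : (Fin 1 → V) → E)
    (η : (Fin 1 → V) → F) (v : Fin 2 → V) :
    wedgeRaw μ ω η v
      = μ (ω fun _ => v 0) (η fun _ => v 1) - μ (ω fun _ => v 1) (η fun _ => v 0) := by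
  rw [wedgeRaw, show shuffleSet 1 1 = {1, Equiv.swap 0 1} by decide,
    Finset.sum_pair (by decide)]
  simp [sub_eq_add_neg, Fin.fin_one_eq_zero]

lemma wedgeRaw_one_two_apply (μ : E →ₗ[ℝ] F →ₗ[ℝ] W) (ω : (Fin 1 → V) → E)
    (η : (Fin 2 → V) → F) (v : Fin 3 → V) :
    wedgeRaw μ ω η v = μ (ω fun _ => v 0) (η ![v 1, v 2])
      - μ (ω fun _ => v 1) (η ![v 0, v 2]) + μ (ω fun _ => v 2) (η ![v 0, v 1]) := by
  rw [wedgeRaw, show shuffleSet 1 2 = {1, Equiv.swap 0 1, Equiv.swap 1 2 * Equiv.swap 0 1} by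
    decide, Finset.sum_insert (by decide), Finset.sum_pair (by decide)]
  simp [sub_eq_add_neg, Fin.fin_one_eq_zero, ← add_assoc]
  congr! <;> rename_i i <;> fin_cases i <;> rfl

lemma wedgeRaw_two_one_apply (μ : E →ₗ[ℝ] F →ₗ[ℝ] W) (ω : (Fin 2 → V) → E)
    (η : (Fin 1 → V) → F) (v : Fin 3 → V) :
    wedgeRaw μ ω η v = μ (ω ![v 0, v 1]) (η fun _ => v 2)
      - μ (ω ![v 0, v 2]) (η fun _ => v 1) + μ (ω ![v 1, v 2]) (η fun _ => v 0) := by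
  rw [wedgeRaw, show shuffleSet 2 1 = {1, Equiv.swap 1 2, Equiv.swap 0 1 * Equiv.swap 1 2} by
    decide, Finset.sum_insert (by decide), Finset.sum_pair (by decide)]
  simp [sub_eq_add_neg, Fin.fin_one_eq_zero, ← add_assoc]
  congr! <;> rename_i i <;> fin_cases i <;> rfl

variable {k₁ k₂ : ℕ}

lemma wedgeRaw_add_right (μ : E →ₗ[ℝ] F →ₗ[ℝ] W) (ω : (Fin k₁ → V) → E)
    (η η' : (Fin k₂ → V) → F) :
    wedgeRaw μ ω (η + η') = wedgeRaw μ ω η + wedgeRaw μ ω η' := by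
  funext v
  simp [wedgeRaw, Finset.sum_add_distrib]

lemma wedgeRaw_sub_right (μ : E →ₗ[ℝ] F →ₗ[ℝ] W) (ω : (Fin k₁ → V) → E)
    (η η' : (Fin k₂ → V) → F) :
    wedgeRaw μ ω (η - η') = wedgeRaw μ ω η - wedgeRaw μ ω η' := by
  funext v
  simp only [wedgeRaw, Pi.sub_apply, map_sub, smul_sub, Finset.sum_sub_distrib]

lemma wedgeRaw_smul_right (μ : E →ₗ[ℝ] F →ₗ[ℝ] W) (ω : (Fin k₁ → V) → E)
    (c : ℝ) (η : (Fin k₂ → V) → F) :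
    wedgeRaw μ ω (c • η) = c • wedgeRaw μ ω η := by
  funext v
  simp [wedgeRaw, Finset.smul_sum, smul_comm c]

lemma map_wedgeRaw {F' W' : Type*} [AddCommGroup F'] [Module ℝ F'] [AddCommGroup W']
    [Module ℝ W'] (μ : E →ₗ[ℝ] F →ₗ[ℝ] W) (μ' : E →ₗ[ℝ] F' →ₗ[ℝ] W') (f : W →ₗ[ℝ] W')
    (φ : F → F') (h : ∀ a b, f (μ a b) = μ' a (φ b))
    (ω : (Fin k₁ → V) → E) (η : (Fin k₂ → V) → F) (v : Fin (k₁ + k₂) → V) :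
    f (wedgeRaw μ ω η v) = wedgeRaw μ' ω (fun w => φ (η w)) v := by
  simp [wedgeRaw, h]

lemma wedgeRaw_two_one_eq_neg {μ : E →ₗ[ℝ] E →ₗ[ℝ] W} (hμ : μ.IsAlt)
    (ω : (Fin 2 → V) → E) (η : (Fin 1 → V) → E) :
    wedgeRaw μ ω η = -wedgeRaw μ η ω := by
  funext v
  simp only [wedgeRaw_two_one_apply, Pi.neg_apply, wedgeRaw_one_two_apply,
    ← hμ.neg (ω _) (η _)]
  abel

lemma wedgeRaw_wedgeRaw_self_eq_zero {μ : E →ₗ[ℝ] E →ₗ[ℝ] E} (hμ : μ.IsAlt)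
    (hjacobi : ∀ a b c, μ a (μ b c) = μ (μ a b) c + μ b (μ a c)) (ω : (Fin 1 → V) → E) :
    wedgeRaw μ ω (wedgeRaw μ ω ω) = 0 := by
  funext v
  simp only [wedgeRaw_one_two_apply, wedgeRaw_one_one_apply, Matrix.cons_val_zero,
    Matrix.cons_val_one, Pi.zero_apply]
  set a₀ := ω fun _ => v 0
  set a₁ := ω fun _ => v 1
  set a₂ := ω fun _ => v 2
  rw [← hμ.neg a₁ a₂, ← hμ.neg a₀ a₂, ← hμ.neg a₀ a₁]
  simp only [sub_neg_eq_add, map_add]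
  rw [hjacobi a₀ a₁ a₂, ← hμ.neg (μ a₀ a₁) a₂]
  abel

end WedgeAlgebra

section FormCalculus

variable {X W W' : Type*} [NormedAddCommGroup X] [NormedSpace ℝ X]
  [NormedAddCommGroup W] [NormedSpace ℝ W] [NormedAddCommGroup W'] [NormedSpace ℝ W']
  {k : ℕ} {x : X}

lemma extDerivRaw_one_apply (ω : X → (Fin 1 → X) → W) (x : X) (v : Fin 2 → X) :
    extDerivRaw ω x v = fderiv ℝ (fun y => ω y fun _ => v 1) x (v 0)
      - fderiv ℝ (fun y => ω y fun _ => v 0) x (v 1) := by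
  simp [extDerivRaw, Fin.sum_univ_two, sub_eq_add_neg]
  congr! <;> rename_i i <;> fin_cases i <;> rfl

lemma extDerivRaw_two_apply (ω : X → (Fin 2 → X) → W) (x : X) (v : Fin 3 → X) :
    extDerivRaw ω x v = fderiv ℝ (fun y => ω y ![v 1, v 2]) x (v 0)
      - fderiv ℝ (fun y => ω y ![v 0, v 2]) x (v 1)
      + fderiv ℝ (fun y => ω y ![v 0, v 1]) x (v 2) := by
  simp [extDerivRaw, Fin.sum_univ_succ, sub_eq_add_neg, ← add_assoc]
  congr! <;> funext i <;> fin_cases i <;> rfl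

lemma extDerivRaw_add {ω η : X → (Fin k → X) → W}
    (hω : ∀ v, DifferentiableAt ℝ (fun y => ω y v) x)
    (hη : ∀ v, DifferentiableAt ℝ (fun y => η y v) x) :
    extDerivRaw (fun y => ω y + η y) x = extDerivRaw ω x + extDerivRaw η x := by
  funext v
  simp only [extDerivRaw, Pi.add_apply, fderiv_fun_add (hω _) (hη _),
    add_apply, smul_add, Finset.sum_add_distrib]

lemma extDerivRaw_sub {ω η : X → (Fin k → X) → W}
    (hω : ∀ v, DifferentiableAt ℝ (fun y => ω y v) x)
    (hη : ∀ v, DifferentiableAt ℝ (fun y => η y v) x) :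
    extDerivRaw (fun y => ω y - η y) x = extDerivRaw ω x - extDerivRaw η x := by
  funext v
  simp only [extDerivRaw, Pi.sub_apply, fderiv_fun_sub (hω _) (hη _),
    sub_apply, smul_sub, Finset.sum_sub_distrib]

lemma extDerivRaw_const_smul {ω : X → (Fin k → X) → W}
    (hω : ∀ v, DifferentiableAt ℝ (fun y => ω y v) x) (c : ℝ) :
    extDerivRaw (fun y => c • ω y) x = c • extDerivRaw ω x := by
  funext v
  simp only [extDerivRaw, Pi.smul_apply, fderiv_fun_const_smul (hω _),
    smul_apply, Finset.smul_sum, smul_comm c]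

lemma extDerivRaw_comp_linearMap [FiniteDimensional ℝ W] (f : W →ₗ[ℝ] W')
    {ω : X → (Fin k → X) → W} (hω : ∀ v, DifferentiableAt ℝ (fun y => ω y v) x) :
    extDerivRaw (fun y v => f (ω y v)) x = fun v => f (extDerivRaw ω x v) := by
  funext v
  have hf (w) : fderiv ℝ (fun y => f (ω y w)) x
      = f.toContinuousLinearMap.comp (fderiv ℝ (fun y => ω y w) x) :=
    (f.toContinuousLinearMap.hasFDerivAt.comp x (hω w).hasFDerivAt).fderiv
  simp [extDerivRaw, hf]

end FormCalculus

section Bilinear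

open Equiv.Perm

variable {X E F W : Type*} [NormedAddCommGroup X] [NormedSpace ℝ X]
  [NormedAddCommGroup E] [NormedSpace ℝ E] [FiniteDimensional ℝ E]
  [NormedAddCommGroup F] [NormedSpace ℝ F] [FiniteDimensional ℝ F]
  [NormedAddCommGroup W] [NormedSpace ℝ W] {k₁ k₂ : ℕ} {x : X}

lemma fderiv_bilinear_apply (μ : E →ₗ[ℝ] F →ₗ[ℝ] W) {f : X → E} {g : X → F}
    (hf : DifferentiableAt ℝ f x) (hg : DifferentiableAt ℝ g x) (s : X) :
    fderiv ℝ (fun y => μ (f y) (g y)) x s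
      = μ (fderiv ℝ f x s) (g x) + μ (f x) (fderiv ℝ g x s) := by
  change fderiv ℝ (fun y => μ.toContinuousBilinearMap (f y) (g y)) x s = _
  rw [μ.toContinuousBilinearMap.fderiv_of_bilinear hf hg]
  simp [add_comm]

lemma differentiableAt_bilinear (μ : E →ₗ[ℝ] F →ₗ[ℝ] W) {f : X → E} {g : X → F}
    (hf : DifferentiableAt ℝ f x) (hg : DifferentiableAt ℝ g x) :
    DifferentiableAt ℝ (fun y => μ (f y) (g y)) x :=
  (μ.toContinuousBilinearMap.hasFDerivAt_of_bilinear hf.hasFDerivAt hg.hasFDerivAt).differentiableAt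

lemma differentiableAt_wedgeRaw (μ : E →ₗ[ℝ] F →ₗ[ℝ] W) {ω : X → (Fin k₁ → X) → E}
    {η : X → (Fin k₂ → X) → F} (hω : ∀ v, DifferentiableAt ℝ (fun y => ω y v) x)
    (hη : ∀ v, DifferentiableAt ℝ (fun y => η y v) x) (v : Fin (k₁ + k₂) → X) :
    DifferentiableAt ℝ (fun y => wedgeRaw μ (ω y) (η y) v) x := by
  unfold wedgeRaw
  exact .fun_sum fun σ _ =>
    (differentiableAt_bilinear μ (hω _) (hη _)).const_smul (sign σ : ℤ)

lemma fderiv_wedgeRaw_apply (μ : E →ₗ[ℝ] F →ₗ[ℝ] W) {ω : X → (Fin k₁ → X) → E}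
    {η : X → (Fin k₂ → X) → F} (hω : ∀ v, DifferentiableAt ℝ (fun y => ω y v) x)
    (hη : ∀ v, DifferentiableAt ℝ (fun y => η y v) x) (v : Fin (k₁ + k₂) → X) (s : X) :
    fderiv ℝ (fun y => wedgeRaw μ (ω y) (η y) v) x s
      = wedgeRaw μ (fun w => fderiv ℝ (fun y => ω y w) x s) (η x) v
        + wedgeRaw μ (ω x) (fun w => fderiv ℝ (fun y => η y w) x s) v := by
  have hterm (σ : Equiv.Perm (Fin (k₁ + k₂))) : DifferentiableAt ℝ (fun y => (sign σ : ℤ) •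
      μ (ω y fun i => v (σ (Fin.castAdd k₂ i))) (η y fun i => v (σ (Fin.natAdd k₁ i)))) x :=
    (differentiableAt_bilinear μ (hω _) (hη _)).const_smul (sign σ : ℤ)
  unfold wedgeRaw
  rw [fderiv_fun_sum fun σ _ => hterm σ]
  simp only [sum_apply, ← Finset.sum_add_distrib, ← smul_add]
  refine Finset.sum_congr rfl fun σ _ => ?_
  rw [fderiv_fun_const_smul (differentiableAt_bilinear μ (hω _) (hη _)), smul_apply,
    fderiv_bilinear_apply μ (hω _) (hη _)]

lemma extDerivRaw_wedgeRaw_one_one (μ : E →ₗ[ℝ] F →ₗ[ℝ] W) {ω : X → (Fin 1 → X) → E}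
    {η : X → (Fin 1 → X) → F} (hω : ∀ v, DifferentiableAt ℝ (fun y => ω y v) x)
    (hη : ∀ v, DifferentiableAt ℝ (fun y => η y v) x) :
    extDerivRaw (fun y => wedgeRaw μ (ω y) (η y)) x
      = wedgeRaw μ (extDerivRaw ω x) (η x) - wedgeRaw μ (ω x) (extDerivRaw η x) := by
  funext v
  rw [extDerivRaw_two_apply, fderiv_wedgeRaw_apply μ hω hη, fderiv_wedgeRaw_apply μ hω hη,
    fderiv_wedgeRaw_apply μ hω hη]
  simp only [Pi.sub_apply, wedgeRaw_two_one_apply, wedgeRaw_one_two_apply, wedgeRaw_one_one_apply,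
    extDerivRaw_one_apply, Matrix.cons_val_zero, Matrix.cons_val_one, map_sub,
    LinearMap.sub_apply]
  abel

end Bilinear

section SecondDerivatives

variable {X W : Type*} [NormedAddCommGroup X] [NormedSpace ℝ X]
  [NormedAddCommGroup W] [NormedSpace ℝ W] {k : ℕ} {x : X}

lemma fderiv_fderiv_apply {f : X → W} (hf : DifferentiableAt ℝ (fderiv ℝ f) x) (s t : X) :
    fderiv ℝ (fun y => fderiv ℝ f y t) x s = fderiv ℝ (fderiv ℝ f) x s t := by
  rw [fderiv_clm_apply hf (differentiableAt_const t)]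
  simp

lemma differentiableAt_fderiv_of_contDiffAt_two {f : X → W} (hf : ContDiffAt ℝ 2 f x) :
    DifferentiableAt ℝ (fderiv ℝ f) x :=
  (hf.fderiv_right (m := 1) le_rfl).differentiableAt one_ne_zero

lemma differentiableAt_extDerivRaw {ω : X → (Fin k → X) → W}
    (hω : ∀ v, ContDiffAt ℝ 2 (fun y => ω y v) x) (v : Fin (k + 1) → X) :
    DifferentiableAt ℝ (fun y => extDerivRaw ω y v) x := by
  unfold extDerivRaw
  exact .fun_sum fun i _ =>
    ((differentiableAt_fderiv_of_contDiffAt_two (hω _)).clm_apply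
      (differentiableAt_const (v i))).const_smul ((-1 : ℤ) ^ (i : ℕ))

lemma extDerivRaw_extDerivRaw_one {ω : X → (Fin 1 → X) → W}
    (hω : ∀ v, ContDiffAt ℝ 2 (fun y => ω y v) x) :
    extDerivRaw (extDerivRaw ω) x = 0 := by
  have hD (v) := differentiableAt_fderiv_of_contDiffAt_two (hω v)
  have hsymm (v) := (hω v).isSymmSndFDerivAt (by simp [minSmoothness_of_isRCLikeNormedField])
  funext v
  simp only [extDerivRaw_two_apply, extDerivRaw_one_apply, Pi.zero_apply]
  simp only [fderiv_fun_sub ((hD _).clm_apply (differentiableAt_const _))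
    ((hD _).clm_apply (differentiableAt_const _)), sub_apply, fderiv_fderiv_apply (hD _),
    Matrix.cons_val_zero, Matrix.cons_val_one, Matrix.cons_val_fin_one]
  rw [hsymm (fun _ => v 2) (v 0) (v 1), hsymm (fun _ => v 1) (v 0) (v 2),
    hsymm (fun _ => v 0) (v 1) (v 2)]
  abel

end SecondDerivatives

theorem stmt14_general {d : ℕ} {g h l : Type*}
    [NormedAddCommGroup g] [NormedSpace ℝ g] [FiniteDimensional ℝ g]
    [NormedAddCommGroup h] [NormedSpace ℝ h] [FiniteDimensional ℝ h]
    [NormedAddCommGroup l] [NormedSpace ℝ l]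
    (br : g →ₗ[ℝ] g →ₗ[ℝ] g)
    (br_alt : ∀ X : g, br X X = 0)
    (br_jacobi : ∀ X Y Z : g, br X (br Y Z) = br (br X Y) Z + br Y (br X Z))
    (αt : h →ₗ[ℝ] g) (βt : l →ₗ[ℝ] h)
    (ρh : g →ₗ[ℝ] h →ₗ[ℝ] h)
    (hαρ : ∀ (X : g) (Y : h), αt (ρh X Y) = br X (αt Y))
    (U : Set (Fin d → ℝ)) (hU : IsOpen U)
    (A : (Fin d → ℝ) → AlternatingMap ℝ (Fin d → ℝ) g (Fin 1))
    (B : (Fin d → ℝ) → AlternatingMap ℝ (Fin d → ℝ) h (Fin 2))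
    (C : (Fin d → ℝ) → AlternatingMap ℝ (Fin d → ℝ) l (Fin 3))
    (hA : SmoothFormOn A U) (hB : SmoothFormOn B U)
    (F₁ : (Fin d → ℝ) → (Fin 2 → (Fin d → ℝ)) → g)
    (hF₁ : ∀ y, F₁ y =
      extDerivRaw (fun z => ⇑(A z)) y + (2 : ℝ)⁻¹ • wedgeRaw br ⇑(A y) ⇑(A y)
        - (fun v => αt (B y v)))
    (F₂ : (Fin d → ℝ) → (Fin 3 → (Fin d → ℝ)) → h)
    (hF₂ : ∀ y, F₂ y =
      extDerivRaw (fun z => ⇑(B z)) y + wedgeRaw ρh ⇑(A y) ⇑(B y)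
        - (fun v => βt (C y v))) :
    ∀ x ∈ U,
      extDerivRaw F₁ x + wedgeRaw br ⇑(A x) (F₁ x)
        = -(fun v => αt (F₂ x v + βt (C x v))) := by
  intro x hx
  have hA₂ (w : Fin 1 → Fin d → ℝ) : ContDiffAt ℝ 2 (fun y => A y w) x :=
    ((hA w).contDiffAt (hU.mem_nhds hx)).of_le (by norm_cast)
  have hA₁ (w : Fin 1 → Fin d → ℝ) : DifferentiableAt ℝ (fun y => A y w) x :=
    (hA₂ w).differentiableAt two_ne_zero
  have hB₁ (w : Fin 2 → Fin d → ℝ) : DifferentiableAt ℝ (fun y => B y w) x :=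
    ((hB w).contDiffAt (hU.mem_nhds hx)).differentiableAt (by simp)
  have hdF₁ : extDerivRaw F₁ x
      = -wedgeRaw br ⇑(A x) (extDerivRaw (fun z => ⇑(A z)) x)
        - fun v => αt (extDerivRaw (fun z => ⇑(B z)) x v) := by
    have hdA := differentiableAt_extDerivRaw hA₂
    have hAA := differentiableAt_wedgeRaw br hA₁ hA₁
    have hαB (w : Fin 2 → Fin d → ℝ) : DifferentiableAt ℝ (fun y => αt (B y w)) x :=
      αt.toContinuousLinearMap.differentiableAt.comp x (hB₁ w)
    rw [funext hF₁, extDerivRaw_sub, extDerivRaw_add, extDerivRaw_const_smul,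
      extDerivRaw_extDerivRaw_one hA₂, extDerivRaw_wedgeRaw_one_one br hA₁ hA₁,
      wedgeRaw_two_one_eq_neg br_alt, extDerivRaw_comp_linearMap αt hB₁]
    · module
    exacts [hAA, hdA, fun v => (hAA v).const_smul _, fun v => (hdA v).add ((hAA v).const_smul _),
      hαB]
  have hAF₁ : wedgeRaw br ⇑(A x) (F₁ x)
      = wedgeRaw br ⇑(A x) (extDerivRaw (fun z => ⇑(A z)) x)
        - wedgeRaw br ⇑(A x) (fun v => αt (B x v)) := by
    rw [hF₁ x, wedgeRaw_sub_right, wedgeRaw_add_right, wedgeRaw_smul_right,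
      wedgeRaw_wedgeRaw_self_eq_zero br_alt br_jacobi, smul_zero, add_zero]
  rw [hdF₁, hAF₁, hF₂ x]
  funext v
  simp only [Pi.add_apply, Pi.sub_apply, Pi.neg_apply, sub_add_cancel, map_add,
    map_wedgeRaw ρh br αt αt hαρ]
  abel

/-- let `g` be a finite-dimensional real Lie algebra (bracket `br`,
alternating and satisfying the Jacobi identity), `h`, `l` finite-dimensional real vector
spaces, `α̃ : h → g`, `β̃ : l → h` linear, and `▷ : g × h → h` bilinear with
`α̃(X ▷ Y) = [X, α̃(Y)]`. For a smooth `g`-valued 1-form `A`, a smooth `h`-valued 2-form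
`B` and a smooth `l`-valued 3-form `C` on an open `U ⊆ ℝ^d`, with
`F₁ := dA + ½ A ∧^{[,]} A − α̃ ∘ B` and `F₂ := dB + A ∧^▷ B − β̃ ∘ C`, the first
3-Bianchi identity `dF₁ + A ∧^{[,]} F₁ = −α̃ ∘ (F₂ + β̃ ∘ C)` holds on `U`. -/
theorem stmt14 {d : ℕ} {g h l : Type*}
    [NormedAddCommGroup g] [NormedSpace ℝ g] [FiniteDimensional ℝ g]
    [NormedAddCommGroup h] [NormedSpace ℝ h] [FiniteDimensional ℝ h]
    [NormedAddCommGroup l] [NormedSpace ℝ l] [FiniteDimensional ℝ l]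
    (br : g →ₗ[ℝ] g →ₗ[ℝ] g)
    (br_alt : ∀ X : g, br X X = 0)
    (br_jacobi : ∀ X Y Z : g, br X (br Y Z) = br (br X Y) Z + br Y (br X Z))
    (αt : h →ₗ[ℝ] g) (βt : l →ₗ[ℝ] h)
    (ρh : g →ₗ[ℝ] h →ₗ[ℝ] h)
    (hαρ : ∀ (X : g) (Y : h), αt (ρh X Y) = br X (αt Y))
    (U : Set (Fin d → ℝ)) (hU : IsOpen U)
    (A : (Fin d → ℝ) → AlternatingMap ℝ (Fin d → ℝ) g (Fin 1))
    (B : (Fin d → ℝ) → AlternatingMap ℝ (Fin d → ℝ) h (Fin 2))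
    (C : (Fin d → ℝ) → AlternatingMap ℝ (Fin d → ℝ) l (Fin 3))
    (hA : SmoothFormOn A U) (hB : SmoothFormOn B U) (hC : SmoothFormOn C U)
    (F₁ : (Fin d → ℝ) → (Fin 2 → (Fin d → ℝ)) → g)
    (hF₁ : ∀ y, F₁ y =
      extDerivRaw (fun z => ⇑(A z)) y + (2 : ℝ)⁻¹ • wedgeRaw br ⇑(A y) ⇑(A y)
        - (fun v => αt (B y v)))
    (F₂ : (Fin d → ℝ) → (Fin 3 → (Fin d → ℝ)) → h)
    (hF₂ : ∀ y, F₂ y =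
      extDerivRaw (fun z => ⇑(B z)) y + wedgeRaw ρh ⇑(A y) ⇑(B y)
        - (fun v => βt (C y v))) :
    ∀ x ∈ U,
      extDerivRaw F₁ x + wedgeRaw br ⇑(A x) (F₁ x)
        = -(fun v => αt (F₂ x v + βt (C x v))) :=
  stmt14_general br br_alt br_jacobi αt βt ρh hαρ U hU A B C hA hB F₁ hF₁ F₂ hF₂
end
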